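/- arXiv:1110.3308 — 10 statements merged into one kernel-verified Lean document; each statement's English description precedes it below -/
import Mathlib

section
/- If d₁ and d₂ are divisors of |b|_N with d₁ ∣ d₂, and N has Midy's property for b and d₁, then N has Midy's property for b and d₂. -/
/-- Multiplicative order of `b` modulo `N`. -/
noncomputable def ord (b N : ℕ) : ℕ := orderOf (b : ZMod N)

/-- The Midy set of `N` to base `b`: divisors `d ≥ 2` of `|b|_N` such that for every
prime `q` dividing `gcd(b^(|b|_N/d) - 1, N)` one has `ν_q(N) ≤ ν_q(d)`. -/
def MidySet (b N : ℕ) : Set ℕ :=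
  {d | 2 ≤ d ∧ d ∣ ord b N ∧
    ∀ q : ℕ, q.Prime → q ∣ Nat.gcd (b ^ (ord b N / d) - 1) N →
      N.factorization q ≤ d.factorization q}

lemma ord_pos (b N : ℕ) (hN : 0 < N) (h : Nat.Coprime N b) : 0 < ord b N := by
  haveI : NeZero N := ⟨hN.ne'⟩
  have hmod : b ^ Nat.totient N ≡ 1 [MOD N] := Nat.ModEq.pow_totient h.symm
  have hcast : ((b : ZMod N)) ^ Nat.totient N = 1 := by
    have := (ZMod.natCast_eq_natCast_iff _ _ _).2 hmod
    push_cast at this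
    simpa using this
  have : IsOfFinOrder (b : ZMod N) :=
    isOfFinOrder_iff_pow_eq_one.2 ⟨Nat.totient N, Nat.totient_pos.2 hN, hcast⟩
  exact orderOf_pos_iff.2 this

theorem stmt2 (b N d₁ d₂ : ℕ) (hb : 2 ≤ b) (hN : 0 < N) (h : Nat.Coprime N b)
    (h1 : d₁ ∣ ord b N) (h2 : d₂ ∣ ord b N) (h12 : d₁ ∣ d₂)
    (hm : d₁ ∈ MidySet b N) : d₂ ∈ MidySet b N := by
  obtain ⟨hd1, -, hq1⟩ := hm
  have hordpos := ord_pos b N hN h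
  have hd2pos : 0 < d₂ := by
    rcases Nat.eq_zero_or_pos d₂ with h0 | h0
    · subst h0; simp at h2; omega
    · exact h0
  have hd1pos : 0 < d₁ := by omega
  refine ⟨le_trans hd1 (Nat.le_of_dvd hd2pos h12), h2, ?_⟩
  intro q hq hqd
  obtain ⟨t, ht⟩ := h12
  have htpos : 0 < t := by
    rcases Nat.eq_zero_or_pos t with h0 | h0
    · subst h0; simp at ht; omega
    · exact h0
  -- ord/d₁ = (ord/d₂) * t
  have hdiv : ord b N / d₁ = (ord b N / d₂) * t := by
    obtain ⟨k, hk⟩ := h2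
    have hk2 : ord b N / d₂ = k := by rw [hk, Nat.mul_div_cancel_left _ hd2pos]
    rw [hk2, hk, ht, mul_assoc, Nat.mul_div_cancel_left _ hd1pos, mul_comm]
  have hdvdpow : b ^ (ord b N / d₂) - 1 ∣ b ^ (ord b N / d₁) - 1 := by
    rw [hdiv, pow_mul]
    simpa using Nat.sub_dvd_pow_sub_pow (b ^ (ord b N / d₂)) 1 t
  have hq' : q ∣ Nat.gcd (b ^ (ord b N / d₁) - 1) N :=
    Nat.dvd_gcd ((Nat.dvd_gcd_iff.1 hqd).1.trans hdvdpow) (Nat.dvd_gcd_iff.1 hqd).2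
  have h1' := hq1 q hq hq'
  have hfac : d₁.factorization q ≤ d₂.factorization q :=
    (Nat.factorization_le_iff_dvd hd1pos.ne' hd2pos.ne').2 ⟨t, ht⟩ q
  exact le_trans h1' hfac
end

section
/- Let N₁, N₂, d be positive integers with d ≥ 2 a common divisor of |b|_{N₁} and |b|_{N₂}. If N₂ has Midy's property for b and d, and N₁ divides N₂, then N₁ has Midy's property for b and d. -/
theorem stmt3 (b N₁ N₂ d : ℕ) (hb : 2 ≤ b) (hN₁ : 0 < N₁) (hN₂ : 0 < N₂)
    (h1 : Nat.Coprime N₁ b) (h2 : Nat.Coprime N₂ b) (hd : 2 ≤ d)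
    (hd1 : d ∣ ord b N₁) (hd2 : d ∣ ord b N₂)
    (hm : d ∈ MidySet b N₂) (hdvd : N₁ ∣ N₂) : d ∈ MidySet b N₁ := by
  obtain ⟨-, -, hm3⟩ := hm
  refine ⟨hd, hd1, ?_⟩
  intro q hq hqd
  -- ord b N₁ ∣ ord b N₂
  have h12 : ord b N₁ ∣ ord b N₂ := by
    apply orderOf_dvd_of_pow_eq_one
    have h := pow_orderOf_eq_one (b : ZMod N₂)
    have h' := congrArg (ZMod.castHom hdvd (ZMod N₁)) h
    rwa [map_pow, map_natCast, map_one] at h'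
  -- (ord b N₁)/d ∣ (ord b N₂)/d
  have hdivdvd : ord b N₁ / d ∣ ord b N₂ / d := by
    obtain ⟨k, hk⟩ := h12
    exact ⟨k, by rw [hk, mul_comm, Nat.mul_div_assoc k hd1, mul_comm]⟩
  -- b^(e₁/d) - 1 ∣ b^(e₂/d) - 1
  have hsub : b ^ (ord b N₁ / d) - 1 ∣ b ^ (ord b N₂ / d) - 1 := by
    obtain ⟨k, hk⟩ := hdivdvd
    have := Nat.sub_dvd_pow_sub_pow (b ^ (ord b N₁ / d)) 1 k
    simpa [hk, one_pow, pow_mul] using this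
  have hq2 : q ∣ Nat.gcd (b ^ (ord b N₂ / d) - 1) N₂ :=
    Nat.dvd_gcd (dvd_trans (dvd_trans (Nat.dvd_gcd_iff.mp hqd).1 hsub) dvd_rfl)
      (dvd_trans ((Nat.dvd_gcd_iff.mp hqd).2) hdvd)
  have hfact : N₁.factorization q ≤ N₂.factorization q :=
    (Nat.factorization_le_iff_dvd hN₁.ne' hN₂.ne').2 hdvd q
  exact le_trans hfact (hm3 q hq hq2)
end

section
/- If N has Midy's property for b and 2, and d is an even divisor of |b|_N with d ≥ 2, then N has Midy's property for b and d, and moreover the multiplier satisfies Σ_{i=1}^{d} (b^{ik} mod N) = (d/2)·N, where |b|_N = dk. -/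
/-- From Midy's condition for 2 one gets `N ∣ x + 1` where `x = b^(ord/2)`. -/
lemma key_dvd (N x : ℕ) (hN : 1 < N) (hx : 2 ≤ x) (hdvd : N ∣ (x - 1) * (x + 1))
    (hcond : ∀ q : ℕ, q.Prime → q ∣ Nat.gcd (x - 1) N →
      N.factorization q ≤ (2 : ℕ).factorization q) :
    N ∣ x + 1 := by
  have hN0 : N ≠ 0 := by omega
  have hx1 : x - 1 ≠ 0 := by omega
  have hx2 : x + 1 ≠ 0 := by omega
  rw [← Nat.factorization_le_iff_dvd hN0 hx2]
  rw [Finsupp.le_def]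
  intro p
  by_cases hp : p.Prime
  · have hfac := (Nat.factorization_le_iff_dvd hN0 (mul_ne_zero hx1 hx2)).mpr hdvd
    rw [Finsupp.le_def] at hfac
    have hfacp := hfac p
    rw [Nat.factorization_mul hx1 hx2, Finsupp.add_apply] at hfacp
    by_cases hpd : p ∣ (x - 1) ∧ p ∣ N
    · have hle := hcond p hp (Nat.dvd_gcd hpd.1 hpd.2)
      by_cases hp2 : p = 2
      · subst hp2
        have h2x : 2 ∣ x + 1 := by
          obtain ⟨c, hc⟩ := hpd.1; omega
        have h1 : 0 < (x + 1).factorization 2 :=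
          Nat.Prime.factorization_pos_of_dvd Nat.prime_two hx2 h2x
        have h21 : (2 : ℕ).factorization 2 = 1 :=
          Nat.Prime.factorization_self Nat.prime_two
        omega
      · have : (2 : ℕ).factorization p = 0 := by
          rw [Nat.Prime.factorization Nat.prime_two, Finsupp.single_apply,
            if_neg (fun hh => hp2 hh.symm)]
        omega
    · rcases not_and_or.mp hpd with hnd | hnd
      · have : (x - 1).factorization p = 0 := Nat.factorization_eq_zero_of_not_dvd hnd
        omega
      · have : N.factorization p = 0 := Nat.factorization_eq_zero_of_not_dvd hnd
        omega
  · simp [Nat.factorization_eq_zero_of_not_prime _ hp]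

lemma pair_mod (N x y : ℕ) (hN : 0 < N) (hdvd : N ∣ x + y) (hx : x % N ≠ 0) :
    x % N + y % N = N := by
  have h1 : (x % N + y % N) % N = 0 := by
    rw [← Nat.add_mod]
    obtain ⟨c, hc⟩ := hdvd
    simp [hc, Nat.mul_mod_right]
  have hxN : x % N < N := Nat.mod_lt _ hN
  have hyN : y % N < N := Nat.mod_lt _ hN
  have h2 : N ∣ x % N + y % N := Nat.dvd_of_mod_eq_zero h1
  obtain ⟨c, hc⟩ := h2
  have hc2 : c < 2 := by
    by_contra hcge
    push_neg at hcge
    have : N * 2 ≤ N * c := Nat.mul_le_mul_left _ hcge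
    omega
  interval_cases c <;> omega

theorem stmt4 (b N d k : ℕ) (hb : 2 ≤ b) (hN : 1 < N) (h : Nat.Coprime N b)
    (h2 : 2 ∈ MidySet b N) (hd : d ∣ ord b N) (hde : 2 ∣ d) (hd2 : 2 ≤ d)
    (hk : ord b N = d * k) :
    d ∈ MidySet b N ∧ ∑ i ∈ Finset.range d, b ^ ((i + 1) * k) % N = (d / 2) * N := by
  obtain ⟨-, h2d, h2c⟩ := h2
  have hN0 : 0 < N := by omega
  haveI : NeZero N := ⟨by omega⟩
  -- the order is positive
  have hu : IsUnit (b : ZMod N) := (ZMod.isUnit_iff_coprime b N).mpr h.symm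
  have hordpos : 0 < ord b N := by
    have h1 : orderOf (hu.unit : (ZMod N)ˣ) > 0 := orderOf_pos _
    have h2 : orderOf ((hu.unit : (ZMod N)ˣ) : ZMod N) = orderOf hu.unit := orderOf_units
    rw [hu.unit_spec] at h2
    unfold ord
    omega
  have hord2 : 2 ≤ ord b N := Nat.le_of_dvd hordpos h2d
  have hk0 : 0 < k := by
    rcases Nat.eq_zero_or_pos k with h0 | h0
    · rw [h0, mul_zero] at hk; omega
    · exact h0
  obtain ⟨m, hm⟩ := hde
  have hm1 : 1 ≤ m := by omega
  have hhalf : ord b N / 2 = m * k := by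
    rw [hk, hm, mul_assoc]
    exact Nat.mul_div_cancel_left _ (by norm_num)
  -- N ∣ b ^ ord - 1
  have hbt : ((b : ZMod N)) ^ (ord b N) = 1 := pow_orderOf_eq_one _
  have hcast : ((b ^ (ord b N) : ℕ) : ZMod N) = ((1 : ℕ) : ZMod N) := by
    push_cast
    simpa using hbt
  have hmodeq : b ^ (ord b N) ≡ 1 [MOD N] := (ZMod.natCast_eq_natCast_iff _ _ _).mp hcast
  have hble : 1 ≤ b ^ (ord b N) := Nat.one_le_pow _ _ (by omega)
  have hdvd1 : N ∣ b ^ (ord b N) - 1 := (Nat.modEq_iff_dvd' hble).mp hmodeq.symm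
  -- factor b^ord - 1
  set x := b ^ (ord b N / 2) with hxdef
  have hx2 : 2 ≤ x := by
    rw [hxdef]
    calc 2 ≤ b := hb
    _ = b ^ 1 := (pow_one b).symm
    _ ≤ b ^ (ord b N / 2) := Nat.pow_le_pow_right (by omega) (by omega)
  have hxs : x * x = b ^ (ord b N) := by
    rw [hxdef, ← pow_add]
    congr 1
    omega
  have hfact : (x - 1) * (x + 1) = b ^ (ord b N) - 1 := by
    rw [← hxs]
    have h1x : 1 ≤ x := by omega
    have h1xx : 1 ≤ x * x := by nlinarith
    zify [h1x, h1xx]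
    ring
  have hdvd2 : N ∣ (x - 1) * (x + 1) := hfact ▸ hdvd1
  have hkey : N ∣ x + 1 := key_dvd N x hN hx2 hdvd2 h2c
  have hkeymk : N ∣ b ^ (m * k) + 1 := by
    have h' := hkey
    rw [hxdef, hhalf] at h'
    exact h'
  have hbmk1 : 1 ≤ b ^ (m * k) := Nat.one_le_pow _ _ (by omega)
  constructor
  · refine ⟨hd2, hd, ?_⟩
    intro q hq hqg
    have hq1 : q ∣ b ^ (ord b N / d) - 1 := (Nat.dvd_gcd_iff.mp hqg).1
    have hq2 : q ∣ N := (Nat.dvd_gcd_iff.mp hqg).2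
    have hordd : ord b N / d = k := by
      rw [hk]
      exact Nat.mul_div_cancel_left _ (by omega)
    rw [hordd] at hq1
    -- q ∣ b^(m*k) - 1
    have hdd : b ^ k - 1 ∣ b ^ (m * k) - 1 := by
      have := Nat.sub_dvd_pow_sub_pow (b ^ k) 1 m
      simpa [← pow_mul, one_pow, mul_comm] using this
    have hq3 : q ∣ b ^ (m * k) - 1 := hq1.trans hdd
    have hq4 : q ∣ b ^ (m * k) + 1 := hq2.trans hkeymk
    have hq5 : q ∣ 2 := by
      have he : (b ^ (m * k) + 1) - (b ^ (m * k) - 1) = 2 := by omega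
      exact he ▸ Nat.dvd_sub hq4 hq3
    have hq2eq : q = 2 := (Nat.prime_dvd_prime_iff_eq hq Nat.prime_two).mp hq5
    subst hq2eq
    -- show ν_2(N) ≤ ν_2(d)
    have h2x1 : 2 ∣ x - 1 := by
      obtain ⟨c, hc⟩ := hq2.trans hkey
      omega
    have hle := h2c 2 Nat.prime_two (Nat.dvd_gcd h2x1 hq2)
    have h21 : (2 : ℕ).factorization 2 = 1 :=
      Nat.Prime.factorization_self Nat.prime_two
    have hdpos : 0 < d.factorization 2 :=
      Nat.Prime.factorization_pos_of_dvd Nat.prime_two (by omega) ⟨m, hm⟩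
    omega
  · -- the sum
    have hd2m : d / 2 = m := by omega
    rw [hm, two_mul, Finset.sum_range_add, ← Finset.sum_add_distrib]
    have hterm : ∀ i ∈ Finset.range m,
        b ^ ((i + 1) * k) % N + b ^ ((m + i + 1) * k) % N = N := by
      intro i _
      have hcop : N.Coprime (b ^ ((i + 1) * k)) := h.pow_right _
      have hne : b ^ ((i + 1) * k) % N ≠ 0 := by
        intro h0
        have : N ∣ b ^ ((i + 1) * k) := Nat.dvd_of_mod_eq_zero h0
        have := Nat.Coprime.eq_one_of_dvd hcop this
        omega
      refine pair_mod N _ _ hN0 ?_ hne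
      have heq : b ^ ((i + 1) * k) + b ^ ((m + i + 1) * k)
          = b ^ ((i + 1) * k) * (b ^ (m * k) + 1) := by
        have hexp : (m + i + 1) * k = (i + 1) * k + m * k := by ring
        rw [hexp, pow_add]
        ring
      rw [heq]
      exact Dvd.dvd.mul_left hkeymk _
    rw [Finset.sum_congr rfl hterm, Finset.sum_const, Finset.card_range, smul_eq_mul]
    have : (m + m) / 2 = m := by omega
    rw [this]
end

section
/- For a prime p not dividing b, every divisor d ≥ 2 of |b|_p belongs to M_b(p); consequently |M_b(p)| = τ(|b|_p) − 1, where τ(n) is the number of positive divisors of n. -/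
lemma stmt8_aux (b p : ℕ) (hb : 2 ≤ b) (hp : p.Prime) (hpb : ¬ p ∣ b) :
    0 < ord b p := by
  haveI : Fact p.Prime := ⟨hp⟩
  have hbu : (b : ZMod p) ≠ 0 := by
    rw [Ne, ZMod.natCast_eq_zero_iff]; exact hpb
  rw [ord, orderOf_pos_iff]
  exact isOfFinOrder_iff_pow_eq_one.mpr
    ⟨p - 1, Nat.sub_pos_of_lt hp.one_lt, ZMod.pow_card_sub_one_eq_one hbu⟩

theorem stmt8 (b p : ℕ) (hb : 2 ≤ b) (hp : p.Prime) (hpb : ¬ p ∣ b) :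
    (∀ d : ℕ, 2 ≤ d → d ∣ ord b p → d ∈ MidySet b p) ∧
    (MidySet b p).ncard = (ord b p).divisors.card - 1 := by
  haveI : Fact p.Prime := ⟨hp⟩
  have hord : 0 < ord b p := stmt8_aux b p hb hp hpb
  have key : ∀ d : ℕ, 2 ≤ d → d ∣ ord b p → d ∈ MidySet b p := by
    intro d hd2 hdd
    refine ⟨hd2, hdd, ?_⟩
    intro q hq hqd
    exfalso
    set k := ord b p / d with hk
    have hkd : k * d = ord b p := Nat.div_mul_cancel hdd
    have hkpos : 0 < k := Nat.div_pos (Nat.le_of_dvd hord hdd) (by omega)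
    have hbk : 1 ≤ b ^ k := Nat.one_le_pow _ _ (by omega)
    have hqp : q = p :=
      (Nat.prime_dvd_prime_iff_eq hq hp).mp (hqd.trans (Nat.gcd_dvd_right _ _))
    have hpdvd : p ∣ b ^ k - 1 := hqp ▸ hqd.trans (Nat.gcd_dvd_left _ _)
    have hcast : ((b ^ k - 1 : ℕ) : ZMod p) = 0 :=
      (ZMod.natCast_eq_zero_iff _ _).mpr hpdvd
    rw [Nat.cast_sub hbk, Nat.cast_pow, Nat.cast_one, sub_eq_zero] at hcast
    have : ord b p ∣ k := orderOf_dvd_of_pow_eq_one hcast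
    have h1 := Nat.le_of_dvd hkpos this
    have h2 : k * 2 ≤ k * d := Nat.mul_le_mul_left k hd2
    omega
  refine ⟨key, ?_⟩
  have hset : MidySet b p = ↑((ord b p).divisors.erase 1) := by
    ext d
    simp only [Finset.coe_erase, Set.mem_diff, Finset.mem_coe, Nat.mem_divisors,
      Set.mem_singleton_iff]
    constructor
    · rintro ⟨h2, hdvd, -⟩
      exact ⟨⟨hdvd, hord.ne'⟩, by omega⟩
    · rintro ⟨⟨hdvd, -⟩, hne⟩
      have : 0 < d := Nat.pos_of_dvd_of_pos hdvd hord
      exact key d (by omega) hdvd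
  rw [hset, Set.ncard_coe_finset,
    Finset.card_erase_of_mem (Nat.one_mem_divisors.mpr hord.ne')]
end

section
/- If M and N are positive integers coprime to b with |b|_{MN} = |b|_N, then M_b(MN) ⊆ M_b(N). -/
theorem stmt9 (b M N : ℕ) (hb : 2 ≤ b) (hM : 0 < M) (hN : 0 < N)
    (hMb : Nat.Coprime M b) (hNb : Nat.Coprime N b)
    (h : ord b (M * N) = ord b N) : MidySet b (M * N) ⊆ MidySet b N := by
  intro d hd
  obtain ⟨h2, hdvd, hq⟩ := hd
  rw [h] at hdvd hq
  refine ⟨h2, hdvd, fun q hqp hqd => ?_⟩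
  have hq' : q ∣ Nat.gcd (b ^ (ord b N / d) - 1) (M * N) :=
    Nat.dvd_gcd (hqd.trans (Nat.gcd_dvd_left _ _))
      ((hqd.trans (Nat.gcd_dvd_right _ _)).trans (dvd_mul_left _ _))
  calc N.factorization q ≤ (M * N).factorization q :=
        (Nat.factorization_le_iff_dvd hN.ne' (Nat.mul_pos hM hN).ne').2
          (dvd_mul_left _ _) q
    _ ≤ d.factorization q := hq q hqp hq'
end

section
/- Let M, N be coprime positive integers, both coprime to b, with |b|_{MN} = |b|_N. Then M_b(MN) equals the set of d ∈ M_b(N) such that, writing |b|_N = kd, for every prime r dividing gcd(b^k − 1, M) one has ν_r(M) ≤ ν_r(d). -/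
theorem stmt10 (b M N : ℕ) (hb : 2 ≤ b) (hM : 0 < M) (hN : 0 < N)
    (hMN : Nat.Coprime M N) (hcop : Nat.Coprime (M * N) b)
    (h : ord b (M * N) = ord b N) :
    MidySet b (M * N) =
      {d ∈ MidySet b N | ∀ r : ℕ, r.Prime → r ∣ Nat.gcd (b ^ (ord b N / d) - 1) M →
        M.factorization r ≤ d.factorization r} := by
  ext d
  simp only [MidySet, Set.mem_setOf_eq, Set.mem_sep_iff, h]
  constructor
  · rintro ⟨h2, hd, hq⟩
    refine ⟨⟨h2, hd, ?_⟩, ?_⟩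
    · intro q hq' hdvd
      have hdvd' : q ∣ Nat.gcd (b ^ (ord b N / d) - 1) (M * N) :=
        Nat.dvd_gcd (hdvd.trans (Nat.gcd_dvd_left _ _))
          ((hdvd.trans (Nat.gcd_dvd_right _ _)).trans (dvd_mul_left N M))
      have h1 := hq q hq' hdvd'
      refine le_trans ?_ h1
      rw [Nat.factorization_mul hM.ne' hN.ne']
      simp
    · intro r hr hdvd
      have hdvd' : r ∣ Nat.gcd (b ^ (ord b N / d) - 1) (M * N) :=
        Nat.dvd_gcd (hdvd.trans (Nat.gcd_dvd_left _ _))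
          ((hdvd.trans (Nat.gcd_dvd_right _ _)).trans (dvd_mul_right M N))
      have h1 := hq r hr hdvd'
      refine le_trans ?_ h1
      rw [Nat.factorization_mul hM.ne' hN.ne']
      simp
  · rintro ⟨⟨h2, hd, hqN⟩, hqM⟩
    refine ⟨h2, hd, ?_⟩
    intro q hq' hdvd
    have hx : q ∣ b ^ (ord b N / d) - 1 := hdvd.trans (Nat.gcd_dvd_left _ _)
    have hmn : q ∣ M * N := hdvd.trans (Nat.gcd_dvd_right _ _)
    rw [Nat.factorization_mul hM.ne' hN.ne']
    rcases (Nat.Prime.dvd_mul hq').mp hmn with hqM' | hqN'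
    · have hn : ¬ q ∣ N := fun hn =>
        hq'.one_lt.ne' (Nat.eq_one_of_dvd_one (hMN ▸ Nat.dvd_gcd hqM' hn))
      have h0 : N.factorization q = 0 := Nat.factorization_eq_zero_of_not_dvd hn
      have := hqM q hq' (Nat.dvd_gcd hx hqM')
      simp [Finsupp.add_apply, h0, this]
    · have hm : ¬ q ∣ M := fun hm =>
        hq'.one_lt.ne' (Nat.eq_one_of_dvd_one (hMN ▸ Nat.dvd_gcd hm hqN'))
      have h0 : M.factorization q = 0 := Nat.factorization_eq_zero_of_not_dvd hm
      have := hqN q hq' (Nat.dvd_gcd hx hqN')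
      simp [Finsupp.add_apply, h0, this]
end

section
/- Let p be a prime not dividing N·b such that |b|_p divides |b|_N, and set s = ν_p(|b|_N). Then M_b(p^{s+1}·N) = {d ∈ M_b(N) : with |b|_N = kd, gcd(b^k − 1, p) = 1}. -/
/-- Lifting-the-exponent style lemma: if `p ∣ x - 1` then `p^(s+1) ∣ x^(p^s) - 1`. -/
lemma aux_lift (p : ℕ) (hp : p.Prime) (x : ℤ) (h : (p : ℤ) ∣ x - 1) (s : ℕ) :
    (p : ℤ) ^ (s + 1) ∣ x ^ (p ^ s) - 1 := by
  induction s with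
  | zero => simpa using h
  | succ s ih =>
    set y : ℤ := x ^ (p ^ s) with hy
    have hxy : x ^ (p ^ (s + 1)) = y ^ p := by
      rw [hy, ← pow_mul, pow_succ]
    have hpy : (p : ℤ) ∣ y - 1 := dvd_trans (dvd_pow_self _ (Nat.succ_ne_zero s)) ih
    have hsum : (p : ℤ) ∣ ∑ i ∈ Finset.range p, y ^ i := by
      rw [← ZMod.intCast_zmod_eq_zero_iff_dvd]
      have hy1 : (y : ZMod p) = 1 := by
        have := (ZMod.intCast_zmod_eq_zero_iff_dvd (y - 1) p).mpr hpy
        push_cast at this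
        linear_combination this
      push_cast
      simp [hy1, CharP.cast_eq_zero]
    calc (p : ℤ) ^ (s + 1 + 1) = p ^ (s + 1) * p := by ring
    _ ∣ (y - 1) * ∑ i ∈ Finset.range p, y ^ i := mul_dvd_mul ih hsum
    _ = x ^ (p ^ (s + 1)) - 1 := by rw [hxy, mul_comm, geom_sum_mul]

/-- `b^k = 1` in `ZMod m` iff `m ∣ b^k - 1` over the integers. -/
lemma aux_pow_eq_one_iff (b m k : ℕ) :
    ((b : ZMod m)) ^ k = 1 ↔ (m : ℤ) ∣ (b : ℤ) ^ k - 1 := by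
  rw [← ZMod.intCast_zmod_eq_zero_iff_dvd]
  push_cast
  rw [sub_eq_zero]

lemma aux_ord_pos (b N : ℕ) (hN : 0 < N) (h : Nat.Coprime b N) : 0 < ord b N := by
  have htot : ((b : ZMod N)) ^ N.totient = 1 := by
    have := (Nat.ModEq.pow_totient h)
    have h2 : ((b ^ N.totient : ℕ) : ZMod N) = ((1 : ℕ) : ZMod N) :=
      (ZMod.natCast_eq_natCast_iff _ _ _).mpr this
    push_cast at h2
    exact h2
  exact orderOf_pos_iff.mpr (isOfFinOrder_iff_pow_eq_one.mpr
    ⟨N.totient, Nat.totient_pos.mpr hN, htot⟩)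

theorem stmt11 (b N p s : ℕ) (hb : 2 ≤ b) (hN : 0 < N) (hNb : Nat.Coprime N b)
    (hp : p.Prime) (hpNb : ¬ p ∣ N * b) (hord : ord b p ∣ ord b N)
    (hs : s = (ord b N).factorization p) :
    MidySet b (p ^ (s + 1) * N) =
      {d ∈ MidySet b N | Nat.gcd (b ^ (ord b N / d) - 1) p = 1} := by
  have hpN : ¬ p ∣ N := fun h => hpNb (h.mul_right b)
  have hpb : ¬ p ∣ b := fun h => hpNb (h.mul_left N)
  set n := ord b N with hn
  set M := p ^ (s + 1) * N with hM
  have hMne : M ≠ 0 := by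
    rw [hM]; exact Nat.mul_ne_zero (pow_ne_zero _ hp.pos.ne') hN.ne'
  have hpow_ne : p ^ (s + 1) ≠ 0 := pow_ne_zero _ hp.pos.ne'
  have hnpos : 0 < n := aux_ord_pos b N hN hNb.symm
  -- order of b mod p divides p - 1, in particular p ∤ ord b p
  have hbp0 : (b : ZMod p) ≠ 0 := by
    rw [Ne, ZMod.natCast_eq_zero_iff]
    exact hpb
  have hordp : ord b p ∣ p - 1 := by
    haveI : Fact p.Prime := ⟨hp⟩
    exact orderOf_dvd_of_pow_eq_one (ZMod.pow_card_sub_one_eq_one hbp0)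
  have hpordp : ¬ p ∣ ord b p := by
    intro h
    have hp2 := hp.two_le
    have := Nat.le_of_dvd (by omega : 0 < p - 1) (h.trans hordp)
    omega
  -- key: ord b M = n
  have hps_dvd : p ^ s ∣ n := hs ▸ Nat.ordProj_dvd n p
  have hmul_dvd : ord b p * p ^ s ∣ n :=
    (Nat.Coprime.pow_right s (Nat.coprime_comm.mp
      (hp.coprime_iff_not_dvd.mpr hpordp))).mul_dvd_of_dvd_of_dvd hord hps_dvd
  have hpn1 : (p : ℤ) ^ (s + 1) ∣ (b : ℤ) ^ n - 1 := by
    obtain ⟨m, hm⟩ := hmul_dvd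
    have h1 : (p : ℤ) ∣ (b : ℤ) ^ ord b p - 1 := by
      have := pow_orderOf_eq_one (b : ZMod p)
      rw [aux_pow_eq_one_iff] at this
      simpa [ord] using this
    have h2 : (p : ℤ) ^ (s + 1) ∣ ((b : ℤ) ^ ord b p) ^ (p ^ s) - 1 :=
      aux_lift p hp _ h1 s
    rw [← pow_mul] at h2
    have h3 : ((b : ℤ) ^ (ord b p * p ^ s)) - 1 ∣ (b : ℤ) ^ n - 1 := by
      rw [hm, pow_mul (b : ℤ) (ord b p * p ^ s) m]
      simpa using sub_dvd_pow_sub_pow ((b : ℤ) ^ (ord b p * p ^ s)) 1 m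
    exact h2.trans h3
  have hNn1 : (N : ℤ) ∣ (b : ℤ) ^ n - 1 := by
    have := pow_orderOf_eq_one (b : ZMod N)
    rwa [aux_pow_eq_one_iff] at this
  have hcopM : Nat.Coprime (p ^ (s + 1)) N :=
    Nat.Coprime.pow_left _ (hp.coprime_iff_not_dvd.mpr hpN)
  have hMn1 : (M : ℤ) ∣ (b : ℤ) ^ n - 1 := by
    have hcop : IsCoprime ((p : ℤ) ^ (s + 1)) (N : ℤ) := by
      have := Nat.isCoprime_iff_coprime.mpr hcopM
      push_cast at this ⊢
      exact this
    have := hcop.mul_dvd hpn1 hNn1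
    rw [hM]
    push_cast
    exact this
  have hordM : ord b M = n := by
    apply Nat.dvd_antisymm
    · exact orderOf_dvd_of_pow_eq_one ((aux_pow_eq_one_iff b M n).mpr hMn1)
    · -- n ∣ ord b M
      have h1 := pow_orderOf_eq_one (b : ZMod M)
      rw [aux_pow_eq_one_iff] at h1
      have h2 : (N : ℤ) ∣ (b : ℤ) ^ ord b M - 1 := by
        refine dvd_trans ?_ h1
        exact Int.natCast_dvd_natCast.mpr (dvd_mul_left N (p ^ (s + 1)))
      exact orderOf_dvd_of_pow_eq_one ((aux_pow_eq_one_iff b N _).mpr h2)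
  -- factorization of M
  have hfacM : ∀ q, M.factorization q = (p ^ (s + 1)).factorization q + N.factorization q := by
    intro q
    rw [hM, Nat.factorization_mul hpow_ne hN.ne']
    rfl
  ext d
  simp only [MidySet, Set.mem_setOf_eq, Set.mem_sep_iff, hordM, ← hn]
  constructor
  · rintro ⟨h2, hdvd, hq⟩
    have hdne : d ≠ 0 := by omega
    have hgcd1 : Nat.gcd (b ^ (n / d) - 1) p = 1 := by
      by_contra hg
      have hpx : p ∣ b ^ (n / d) - 1 := by
        rcases (Nat.coprime_or_dvd_of_prime hp (b ^ (n / d) - 1)) with h | h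
        · exact absurd (Nat.coprime_comm.mp h) hg
        · exact h
      have hpM : p ∣ M := (dvd_pow_self p (Nat.succ_ne_zero s)).mul_right N
      have := hq p hp (Nat.dvd_gcd hpx hpM)
      rw [hfacM p, hp.factorization_pow, Nat.factorization_eq_zero_of_not_dvd hpN] at this
      simp at this
      have hdn : d.factorization p ≤ n.factorization p :=
        (Nat.factorization_le_iff_dvd hdne hnpos.ne').mpr hdvd p
      omega
    refine ⟨⟨h2, hdvd, ?_⟩, hgcd1⟩
    intro q hqp hqg
    have hq1 : q ∣ b ^ (n / d) - 1 := hqg.trans (Nat.gcd_dvd_left _ _)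
    have hq2 : q ∣ N := hqg.trans (Nat.gcd_dvd_right _ _)
    have := hq q hqp (Nat.dvd_gcd hq1 (hq2.mul_left _))
    rw [hfacM q] at this
    omega
  · rintro ⟨⟨h2, hdvd, hq⟩, hg⟩
    refine ⟨h2, hdvd, ?_⟩
    intro q hqp hqg
    have hq1 : q ∣ b ^ (n / d) - 1 := hqg.trans (Nat.gcd_dvd_left _ _)
    have hqM : q ∣ M := hqg.trans (Nat.gcd_dvd_right _ _)
    have hqnep : q ≠ p := by
      intro h
      subst h
      have : q ∣ Nat.gcd (b ^ (n / d) - 1) q := Nat.dvd_gcd hq1 dvd_rfl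
      rw [hg] at this
      exact hqp.one_lt.ne' (Nat.eq_one_of_dvd_one this)
    have hqN : q ∣ N := by
      rcases (hqp.dvd_mul.mp hqM) with h | h
      · exact absurd ((Nat.prime_dvd_prime_iff_eq hqp hp).mp
          (hqp.dvd_of_dvd_pow h)) hqnep
      · exact h
    have := hq q hqp (Nat.dvd_gcd hq1 hqN)
    rw [hfacM q, hp.factorization_pow]
    have : ((Finsupp.single p (s + 1)) q : ℕ) = 0 := Finsupp.single_eq_of_ne' (Ne.symm hqnep)
    simp only [Finsupp.single_apply] at this ⊢
    omega
end

section
/- Let N be coprime to b and let p be a prime divisor of b − 1. Then there exists a positive integer s such that for all t > s, M_b(p^t·N) = ∅. -/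
private lemma pow_modEq_one_of_dvd {b m n L : ℕ} (h : b ^ n ≡ 1 [MOD m]) (hd : n ∣ L) :
    b ^ L ≡ 1 [MOD m] := by
  obtain ⟨k, rfl⟩ := hd
  calc b ^ (n * k) = (b ^ n) ^ k := by rw [pow_mul]
    _ ≡ 1 ^ k [MOD m] := h.pow k
    _ = 1 := one_pow k

theorem stmt12 (b N p : ℕ) (hb : 2 ≤ b) (hN : 0 < N) (hNb : Nat.Coprime N b)
    (hp : p.Prime) (hpb : p ∣ b - 1) :
    ∃ s : ℕ, 0 < s ∧ ∀ t : ℕ, s < t → MidySet b (p ^ t * N) = ∅ := by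
  -- p is coprime to b
  have hpb' : Nat.Coprime p b := by
    rw [Nat.Prime.coprime_iff_not_dvd hp]
    intro h
    have h1 : p ∣ b - (b - 1) := Nat.dvd_sub h hpb
    have h2 : b - (b - 1) = 1 := by omega
    rw [h2] at h1
    exact hp.ne_one (Nat.dvd_one.mp h1)
  have hp1 : 1 < p := hp.one_lt
  set a := N.factorization p with ha
  set N' := ordCompl[p] N with hN'def
  have hN'pos : 0 < N' := Nat.ordCompl_pos p hN.ne'
  have hN'dvd : N' ∣ N := Nat.ordCompl_dvd N p
  have hbN' : Nat.Coprime b N' := (hNb.symm).coprime_dvd_right hN'dvd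
  have hpN' : Nat.Coprime p N' := Nat.coprime_ordCompl hp hN.ne'
  -- the order of b mod N'
  set e := ord b N' with he_def
  haveI : NeZero N' := ⟨hN'pos.ne'⟩
  have hu : IsUnit ((b : ℕ) : ZMod N') := (ZMod.isUnit_iff_coprime b N').mpr hbN'
  have he_pos : 0 < e := by
    obtain ⟨u, hu'⟩ := hu
    have : e = orderOf u := by rw [he_def, ord, ← hu', orderOf_units]
    rw [this]
    exact orderOf_pos u
  refine ⟨e.factorization p + 1, Nat.succ_pos _, fun t ht => ?_⟩
  rw [Set.eq_empty_iff_forall_notMem]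
  intro d hd
  obtain ⟨hd2, hdE, hq⟩ := hd
  set M := p ^ t * N with hM_def
  set T := t + a with hT_def
  have hM : M = p ^ T * N' := by
    rw [hM_def, hT_def, pow_add, mul_assoc, hN'def, ha, Nat.ordProj_mul_ordCompl_eq_self]
  have hMpos : 0 < M := Nat.mul_pos (pow_pos hp.pos t) hN
  -- Euler's theorem modulo p^T
  have hbpT : Nat.Coprime b (p ^ T) := (hpb'.symm).pow_right T
  have h1 : b ^ (p ^ T).totient ≡ 1 [MOD p ^ T] := Nat.ModEq.pow_totient hbpT
  -- order modulo N'
  have h2 : b ^ e ≡ 1 [MOD N'] := by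
    have : ((b : ZMod N')) ^ e = 1 := pow_orderOf_eq_one _
    have h3 : ((b ^ e : ℕ) : ZMod N') = ((1 : ℕ) : ZMod N') := by push_cast; simpa using this
    exact (ZMod.natCast_eq_natCast_iff _ _ _).mp h3
  set L := Nat.lcm ((p ^ T).totient) e with hL_def
  have htot_pos : 0 < (p ^ T).totient := Nat.totient_pos.mpr (pow_pos hp.pos T)
  have hL_pos : 0 < L := Nat.pos_of_ne_zero (Nat.lcm_ne_zero htot_pos.ne' he_pos.ne')
  have hL1 : b ^ L ≡ 1 [MOD p ^ T] := pow_modEq_one_of_dvd h1 (Nat.dvd_lcm_left _ _)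
  have hL2 : b ^ L ≡ 1 [MOD N'] := pow_modEq_one_of_dvd h2 (Nat.dvd_lcm_right _ _)
  have hLM : b ^ L ≡ 1 [MOD M] := by
    rw [hM]
    exact (Nat.modEq_and_modEq_iff_modEq_mul (hpN'.pow_left T)).mp ⟨hL1, hL2⟩
  have hEL : ord b M ∣ L := by
    rw [ord, orderOf_dvd_iff_pow_eq_one]
    have h3 : ((b ^ L : ℕ) : ZMod M) = ((1 : ℕ) : ZMod M) :=
      (ZMod.natCast_eq_natCast_iff _ _ _).mpr hLM
    push_cast at h3
    exact h3
  have hdL : d ∣ L := hdE.trans hEL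
  -- apply the Midy condition at q = p
  have hgcd : p ∣ Nat.gcd (b ^ (ord b M / d) - 1) M := by
    refine Nat.dvd_gcd (hpb.trans ?_) (Dvd.dvd.mul_right (dvd_pow_self p (by omega)) N)
    simpa only [one_pow] using Nat.sub_dvd_pow_sub_pow b 1 (ord b M / d)
  have hkey : M.factorization p ≤ d.factorization p := hq p hp hgcd
  -- compute ν_p(M) = T
  have hMfact : M.factorization p = T := by
    rw [hM_def, Nat.factorization_mul (pow_pos hp.pos t).ne' hN.ne']
    simp [hp.factorization_pow, hT_def, ha]
  -- ν_p(d) ≤ ν_p(L)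
  have hdfact : d.factorization p ≤ L.factorization p :=
    (Nat.factorization_le_iff_dvd (by omega) hL_pos.ne').mpr hdL p
  -- ν_p(L) ≤ max (T - 1) (ν_p e)
  have hTpos : 0 < T := by omega
  have htotfact : ((p ^ T).totient).factorization p = T - 1 := by
    rw [Nat.totient_prime_pow hp hTpos,
      Nat.factorization_mul (pow_pos hp.pos (T - 1)).ne' (by omega : p - 1 ≠ 0)]
    have : (p - 1).factorization p = 0 :=
      Nat.factorization_eq_zero_of_not_dvd (fun h => absurd (Nat.le_of_dvd (by omega) h) (by omega))
    simp [hp.factorization_pow, this]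
  have hLfact : L.factorization p ≤ max (T - 1) (e.factorization p) := by
    rw [hL_def, Nat.factorization_lcm htot_pos.ne' he_pos.ne']
    simp [Finsupp.sup_apply, htotfact]
  omega
end

section
/- Let b ≥ 2 and n ≥ 2. There exists a prime p with |b|_p = n, except precisely when (n, b) = (2, 2^γ − 1) for some γ, or (n, b) = (6, 2). -/
open Polynomial


theorem phi_pos (b n : ℕ) (hb : 2 ≤ b) : 0 < (cyclotomic n ℤ).eval (b:ℤ) :=
  cyclotomic_pos' n (by exact_mod_cast hb)

theorem phi_dvd_int (b n : ℕ) (hn : 0 < n) :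
    (cyclotomic n ℤ).eval (b:ℤ) ∣ (b:ℤ) ^ n - 1 := by
  have h := prod_cyclotomic_eq_X_pow_sub_one hn ℤ
  have h2 : ((n.divisors).prod (fun i => cyclotomic i ℤ)).eval (b:ℤ) = (b:ℤ)^n - 1 := by
    rw [h]; simp
  rw [← h2, eval_prod]
  exact Finset.dvd_prod_of_mem _ (Nat.mem_divisors_self n hn.ne')

theorem cast_pow_sub_one (b n : ℕ) (hb : 1 ≤ b) :
    ((b ^ n - 1 : ℕ) : ℤ) = (b:ℤ) ^ n - 1 := by
  have : 1 ≤ b ^ n := Nat.one_le_pow n b hb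
  push_cast [this]; ring

theorem phi_dvd (b n : ℕ) (hb : 1 ≤ b) (hn : 0 < n) :
    ((cyclotomic n ℤ).eval (b:ℤ)).natAbs ∣ b ^ n - 1 := by
  have h1 := phi_dvd_int b n hn
  rw [← cast_pow_sub_one b n hb] at h1
  exact_mod_cast Int.natAbs_dvd.mpr h1

theorem phi_root (b n q : ℕ) (hq : q.Prime) (h : (q:ℤ) ∣ (cyclotomic n ℤ).eval (b:ℤ)) :
    (cyclotomic n (ZMod q)).eval ((b:ℕ) : ZMod q) = 0 := by
  have h1 := cyclotomic.eval_apply (b:ℤ) n (Int.castRingHom (ZMod q))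
  have h2 : (((cyclotomic n ℤ).eval (b:ℤ) : ℤ) : ZMod q) = 0 :=
    (ZMod.intCast_zmod_eq_zero_iff_dvd _ q).mpr h
  simp only [Int.coe_castRingHom] at h1
  rw [← h1] at h2
  simpa using h2

theorem order_eq_of_not_dvd (b n q : ℕ) (hq : q.Prime) (hn : 0 < n)
    (h : (q:ℤ) ∣ (cyclotomic n ℤ).eval (b:ℤ)) (hqn : ¬ q ∣ n) :
    orderOf ((b:ℕ) : ZMod q) = n := by
  haveI : Fact q.Prime := ⟨hq⟩
  haveI : NeZero (n : ZMod q) := ⟨fun hz => hqn ((ZMod.natCast_eq_zero_iff _ _).mp hz)⟩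
  have hroot : IsRoot (cyclotomic n (ZMod q)) ((b:ℕ) : ZMod q) := phi_root b n q hq h
  rw [isRoot_cyclotomic_iff] at hroot
  exact (hroot.eq_orderOf).symm

theorem order_eq_ordCompl (b n q : ℕ) (hq : q.Prime) (hn : 0 < n)
    (h : (q:ℤ) ∣ (cyclotomic n ℤ).eval (b:ℤ)) (hqn : q ∣ n) :
    orderOf ((b:ℕ) : ZMod q) = ordCompl[q] n := by
  haveI : Fact q.Prime := ⟨hq⟩
  have hm : ¬ q ∣ ordCompl[q] n := Nat.not_dvd_ordCompl hq hn.ne'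
  haveI : NeZero ((ordCompl[q] n : ℕ) : ZMod q) :=
    ⟨fun hz => hm ((ZMod.natCast_eq_zero_iff _ _).mp hz)⟩
  have hroot : IsRoot (cyclotomic (q ^ (n.factorization q) * ordCompl[q] n) (ZMod q))
      ((b:ℕ) : ZMod q) := by
    rw [Nat.ordProj_mul_ordCompl_eq_self]
    exact phi_root b n q hq h
  rw [isRoot_cyclotomic_prime_pow_mul_iff_of_charP] at hroot
  exact (hroot.eq_orderOf).symm

theorem not_dvd_b (b n q : ℕ) (hb : 1 ≤ b) (hq : q.Prime) (hn : 0 < n)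
    (h : (q:ℤ) ∣ (cyclotomic n ℤ).eval (b:ℤ)) : ¬ q ∣ b := by
  intro hqb
  have h1 : q ∣ b ^ n - 1 := dvd_trans (by exact_mod_cast Int.natAbs_dvd_natAbs.mpr h) (phi_dvd b n hb hn)
  have h2 : q ∣ b ^ n := hqb.trans (dvd_pow_self b hn.ne')
  have h3 : q ∣ 1 := by
    have : b ^ n - (b ^ n - 1) = 1 := by
      have : 1 ≤ b ^ n := Nat.one_le_pow n b hb
      omega
    exact this ▸ Nat.dvd_sub h2 h1
  exact hq.one_lt.ne' (Nat.dvd_one.mp h3)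

theorem ordCompl_dvd_sub_one (b n q : ℕ) (hb : 1 ≤ b) (hq : q.Prime) (hn : 0 < n)
    (h : (q:ℤ) ∣ (cyclotomic n ℤ).eval (b:ℤ)) (hqn : q ∣ n) :
    ordCompl[q] n ∣ q - 1 := by
  haveI : Fact q.Prime := ⟨hq⟩
  rw [← order_eq_ordCompl b n q hq hn h hqn]
  have hb0 : ((b:ℕ) : ZMod q) ≠ 0 := by
    intro hz
    exact not_dvd_b b n q hb hq hn h ((ZMod.natCast_eq_zero_iff _ _).mp hz)
  have := ZMod.pow_card_sub_one_eq_one hb0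
  exact orderOf_dvd_of_pow_eq_one this

theorem unique_common_prime (b n p q : ℕ) (hb : 1 ≤ b) (hp : p.Prime) (hq : q.Prime) (hn : 0 < n)
    (hpphi : (p:ℤ) ∣ (cyclotomic n ℤ).eval (b:ℤ)) (hqphi : (q:ℤ) ∣ (cyclotomic n ℤ).eval (b:ℤ))
    (hpn : p ∣ n) (hqn : q ∣ n) : p = q := by
  by_contra hne
  -- p divides ordCompl[q] n, which divides q - 1, so p < q; symmetric.
  have key : ∀ p q : ℕ, p.Prime → q.Prime →
      (p:ℤ) ∣ (cyclotomic n ℤ).eval (b:ℤ) → (q:ℤ) ∣ (cyclotomic n ℤ).eval (b:ℤ) →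
      p ∣ n → q ∣ n → p ≠ q → p < q := by
    intro p q hp hq hpphi hqphi hpn hqn hne
    have h1 : ordCompl[q] n ∣ q - 1 := ordCompl_dvd_sub_one b n q hb hq hn hqphi hqn
    have h2 : p ∣ ordCompl[q] n := by
      have hmul : p ∣ q ^ n.factorization q * ordCompl[q] n := by
        rw [Nat.ordProj_mul_ordCompl_eq_self n q]; exact hpn
      exact (Nat.Coprime.pow_right _ ((Nat.coprime_primes hp hq).mpr hne)).dvd_of_dvd_mul_left hmul
    have h3 : p ≤ q - 1 := Nat.le_of_dvd (by
        have := hq.one_lt; omega) (h2.trans h1)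
    omega
  exact absurd (key p q hp hq hpphi hqphi hpn hqn hne) (by
    have := key q p hq hp hqphi hpphi hqn hpn (Ne.symm hne); omega)

theorem phi_prod_dvd (b n : ℕ) (hn : 0 < n) (d : ℕ) (hd : d ∣ n) (hdn : d ≠ n) :
    (cyclotomic n ℤ).eval (b:ℤ) * ((b:ℤ) ^ d - 1) ∣ (b:ℤ) ^ n - 1 := by
  have h2 : ((n.divisors).prod (fun i => cyclotomic i ℤ)).eval (b:ℤ) = (b:ℤ)^n - 1 := by
    rw [prod_cyclotomic_eq_X_pow_sub_one hn ℤ]; simp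
  have hd0 : 0 < d := Nat.pos_of_dvd_of_pos hd hn
  have h3 : ((d.divisors).prod (fun i => cyclotomic i ℤ)).eval (b:ℤ) = (b:ℤ)^d - 1 := by
    rw [prod_cyclotomic_eq_X_pow_sub_one hd0 ℤ]; simp
  rw [← h2, ← h3, eval_prod, eval_prod]
  have hsub : insert n d.divisors ⊆ n.divisors := by
    intro x hx
    rcases Finset.mem_insert.mp hx with h | hx
    · rw [h]; exact Nat.mem_divisors_self n hn.ne'
    · exact Nat.mem_divisors.mpr ⟨(Nat.mem_divisors.mp hx).1.trans hd, hn.ne'⟩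
  have hnotmem : n ∉ d.divisors := by
    intro hmem
    exact hdn (Nat.dvd_antisymm hd (Nat.mem_divisors.mp hmem).1)
  calc (cyclotomic n ℤ).eval (b:ℤ) * (d.divisors).prod (fun i => (cyclotomic i ℤ).eval (b:ℤ))
      = (insert n d.divisors).prod (fun i => (cyclotomic i ℤ).eval (b:ℤ)) := by
        rw [Finset.prod_insert hnotmem]
    _ ∣ (n.divisors).prod (fun i => (cyclotomic i ℤ).eval (b:ℤ)) :=
        Finset.prod_dvd_prod_of_subset _ _ _ hsub

theorem mult_le_one_odd (b n p : ℕ) (hb : 2 ≤ b) (hp : p.Prime) (hodd : Odd p) (hn : 0 < n)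
    (hpn : p ∣ n) (hpphi : (p:ℤ) ∣ (cyclotomic n ℤ).eval (b:ℤ)) :
    ¬ (p^2 ∣ ((cyclotomic n ℤ).eval (b:ℤ)).natAbs) := by
  intro hsq
  set N := ((cyclotomic n ℤ).eval (b:ℤ)).natAbs with hN
  set A := b ^ (n / p) - 1 with hA
  have hb1 : 1 ≤ b := by omega
  have hnp : 0 < n / p := Nat.div_pos (Nat.le_of_dvd hn hpn) hp.pos
  have hApos : 0 < A := by
    have : 2 ≤ b ^ (n/p) := le_trans hb (Nat.le_self_pow hnp.ne' b)
    omega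
  -- p divides A
  have hpb : ¬ p ∣ b := not_dvd_b b n p hb1 hp hn hpphi
  have hm : orderOf ((b:ℕ) : ZMod p) = ordCompl[p] n := order_eq_ordCompl b n p hp hn hpphi hpn
  have hmdvd : ordCompl[p] n ∣ n / p := by
    rw [Nat.dvd_div_iff_mul_dvd hpn]
    calc p * ordCompl[p] n ∣ p ^ (n.factorization p) * ordCompl[p] n := by
          apply mul_dvd_mul_right
          exact dvd_pow_self p (Nat.Prime.factorization_pos_of_dvd hp hn.ne' hpn).ne'
      _ = n := Nat.ordProj_mul_ordCompl_eq_self n p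
  have hpA : p ∣ A := by
    haveI : Fact p.Prime := ⟨hp⟩
    have h1 : ((b:ℕ) : ZMod p) ^ (ordCompl[p] n) = 1 := hm ▸ pow_orderOf_eq_one _
    have h2 : p ∣ b ^ (ordCompl[p] n) - 1 := by
      have : ((b ^ (ordCompl[p] n) - 1 : ℕ) : ZMod p) = 0 := by
        rw [Nat.cast_sub (Nat.one_le_pow _ _ (by omega))]
        push_cast [h1]; ring
      exact (ZMod.natCast_eq_zero_iff _ _).mp this
    refine h2.trans ?_
    obtain ⟨t, ht⟩ := hmdvd
    calc b ^ ordCompl[p] n - 1 ∣ (b ^ ordCompl[p] n) ^ t - 1 ^ t :=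
          Nat.sub_dvd_pow_sub_pow _ 1 t
      _ = A := by rw [hA, one_pow, ← pow_mul, ← ht]
  -- N * A divides b^n - 1
  have hNA : N * A ∣ b ^ n - 1 := by
    have h1 := phi_prod_dvd b n hn (n/p) (Nat.div_dvd_of_dvd hpn)
      (by have := hp.one_lt; intro h; rw [Nat.div_eq_self] at h; omega)
    have hcastN : ((N : ℕ) : ℤ) = (cyclotomic n ℤ).eval (b:ℤ) :=
      Int.natAbs_of_nonneg (phi_pos b n hb).le
    have h2 : ((N * A : ℕ) : ℤ) ∣ ((b ^ n - 1 : ℕ) : ℤ) := by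
      rw [cast_pow_sub_one b n hb1, Nat.cast_mul, hcastN, cast_pow_sub_one b (n/p) hb1]
      exact h1
    exact_mod_cast h2
  -- multiplicity contradiction via LTE
  set t := A.factorization p with ht
  have htA : p ^ t ∣ A := Nat.ordProj_dvd A p
  have hpow : p ^ (t + 2) ∣ b ^ n - 1 := by
    calc p ^ (t + 2) = p ^ 2 * p ^ t := by ring
      _ ∣ N * A := mul_dvd_mul hsq htA
      _ ∣ b ^ n - 1 := hNA
  have hle : ((t + 2 : ℕ) : ℕ∞) ≤ emultiplicity p (b ^ n - 1) :=
    le_emultiplicity_of_pow_dvd hpow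
  have hlte := Nat.emultiplicity_pow_sub_pow hp hodd (x := b ^ (n/p)) (y := 1)
    (by simpa using hpA) (fun h => hpb (hp.dvd_of_dvd_pow h)) p
  rw [← pow_mul, Nat.div_mul_cancel hpn, one_pow] at hlte
  have hself : emultiplicity p p = 1 := Nat.Prime.emultiplicity_self hp
  have hA_emult : emultiplicity p A = (t : ℕ∞) := by
    rw [emultiplicity_eq_coe]
    exact ⟨htA, Nat.pow_succ_factorization_not_dvd hApos.ne' hp⟩
  rw [← hA, hA_emult, hself] at hlte
  rw [hlte] at hle
  have : (t + 2 : ℕ) ≤ t + 1 := by exact_mod_cast hle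
  omega

theorem eval_cyclotomic_two_pow : ∀ (k : ℕ), 1 ≤ k → ∀ (x : ℤ),
    (cyclotomic (2 ^ k) ℤ).eval x = x ^ (2 ^ (k - 1)) + 1
  | 0, h, x => by omega
  | 1, _, x => by simp [cyclotomic_two]
  | (j+2), _, x => by
    have hj : 1 ≤ j + 1 := by omega
    have hdvd : (2:ℕ) ∣ 2 ^ (j+1) := dvd_pow_self 2 (by omega)
    have hexp := cyclotomic_expand_eq_cyclotomic Nat.prime_two hdvd ℤ
    have h2 : (2:ℕ) ^ (j + 2) = 2 ^ (j+1) * 2 := by ring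
    rw [h2, ← hexp, expand_eval, eval_cyclotomic_two_pow (j+1) hj (x^2), ← pow_mul]
    show x ^ (2 * 2 ^ j) + 1 = x ^ (2 ^ (j + 1)) + 1
    rw [pow_succ]
    ring_nf

theorem mult_le_one_two (b n : ℕ) (hb : 2 ≤ b) (hn : 3 ≤ n) (h2n : 2 ∣ n)
    (h2phi : (2:ℤ) ∣ (cyclotomic n ℤ).eval (b:ℤ)) :
    ¬ (2^2 ∣ ((cyclotomic n ℤ).eval (b:ℤ)).natAbs) := by
  intro hsq
  have hn0 : 0 < n := by omega
  have hm : ordCompl[2] n ∣ 2 - 1 := ordCompl_dvd_sub_one b n 2 (by omega) Nat.prime_two hn0 h2phi h2n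
  have hm1 : ordCompl[2] n = 1 := Nat.dvd_one.mp hm
  set k := n.factorization 2 with hk
  have hnk : n = 2 ^ k := by
    have := Nat.ordProj_mul_ordCompl_eq_self n 2
    rw [hm1, mul_one] at this
    exact this.symm
  have hk2 : 2 ≤ k := by
    by_contra h
    interval_cases k <;> omega
  -- N = b ^ (2^(k-1)) + 1
  have heval : (cyclotomic n ℤ).eval (b:ℤ) = (b:ℤ) ^ (2 ^ (k-1)) + 1 := by
    rw [hnk]; exact eval_cyclotomic_two_pow k (by omega) _
  have hNnat : ((cyclotomic n ℤ).eval (b:ℤ)).natAbs = b ^ (2 ^ (k-1)) + 1 := by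
    rw [heval]
    have : ((b ^ (2 ^ (k-1)) + 1 : ℕ) : ℤ) = (b:ℤ) ^ (2 ^ (k-1)) + 1 := by push_cast; ring
    rw [← this, Int.natAbs_natCast]
  rw [hNnat] at hsq
  -- b is odd
  have hpow_odd : Odd (b ^ (2 ^ (k-1))) := by
    have h2 : (2:ℕ) ∣ b ^ (2 ^ (k-1)) + 1 := dvd_trans (by norm_num) hsq
    rcases Nat.even_or_odd (b ^ (2 ^ (k-1))) with he | ho
    · obtain ⟨c, hc⟩ := he; omega
    · exact ho
  have hbodd : Odd b := by
    rcases Nat.even_or_odd b with he | ho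
    · exact absurd (Nat.even_pow.mpr ⟨he, by positivity⟩) (Nat.not_even_iff_odd.mpr hpow_odd)
    · exact ho
  -- b ^ (2^(k-1)) is an odd square, ≡ 1 mod 4
  have hsplit : b ^ (2 ^ (k-1)) = (b ^ (2 ^ (k-2))) ^ 2 := by
    rw [← pow_mul]
    congr 1
    have : 2 ^ (k - 2) * 2 = 2 ^ (k-1) := by
      have h1 : k - 1 = (k-2) + 1 := by omega
      rw [h1]; ring
    omega
  have hcodd : Odd (b ^ (2 ^ (k-2))) := hbodd.pow
  obtain ⟨j, hj⟩ := hcodd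
  rw [hsplit, hj] at hsq
  have : (2*j+1)^2 = 4*(j*j+j) + 1 := by ring
  omega

theorem le_two_pow_pred (p : ℕ) (hp : 1 ≤ p) : p ≤ 2 ^ (p - 1) := by
  have := Nat.lt_two_pow_self (n := p - 1)
  omega

theorem add_two_le_two_pow (p : ℕ) (hp : 2 ≤ p) : p + 2 ≤ 2 ^ p := by
  induction p with
  | zero => omega
  | succ j ih =>
    rcases Nat.lt_or_ge j 2 with h | h
    · interval_cases j <;> simp_all <;> omega
    · have := ih h
      rw [pow_succ]
      omega

theorem three_mul_add_one_le (p : ℕ) (hp : 5 ≤ p) : 3 * p + 1 ≤ 2 ^ p := by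
  induction p with
  | zero => omega
  | succ j ih =>
    rcases Nat.lt_or_ge j 5 with h | h
    · have : j = 4 := by omega
      subst this; norm_num
    · have := ih h
      rw [pow_succ]
      omega

theorem natAbs_dvd_int {x : ℤ} {q : ℕ} (h : q ∣ x.natAbs) : (q:ℤ) ∣ x := by
  have h1 : ((q:ℤ)) ∣ (x.natAbs : ℤ) := Int.natCast_dvd_natCast.mpr h
  exact h1.trans (Int.natAbs_dvd.mpr dvd_rfl)

theorem main3 (b n : ℕ) (hb : 2 ≤ b) (hn : 3 ≤ n) (hexc : ¬(n = 6 ∧ b = 2)) :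
    ∃ p : ℕ, p.Prime ∧ orderOf ((b:ℕ) : ZMod p) = n := by
  obtain ⟨N, hNdef⟩ : ∃ N, N = ((cyclotomic n ℤ).eval (b:ℤ)).natAbs := ⟨_, rfl⟩
  have hn0 : 0 < n := by omega
  have hn1 : 1 < n := by omega
  have hb1 : b ≠ 1 := by omega
  have hN2 : 2 ≤ N := by
    have := sub_one_lt_natAbs_cyclotomic_eval hn1 hb1
    omega
  by_cases hgood : ∃ q : ℕ, q.Prime ∧ q ∣ N ∧ ¬ q ∣ n
  · obtain ⟨q, hq, hqN, hqn⟩ := hgood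
    rw [hNdef] at hqN
    exact ⟨q, hq, order_eq_of_not_dvd b n q hq hn0 (natAbs_dvd_int hqN) hqn⟩
  exfalso
  push_neg at hgood
  obtain ⟨p, hp, hpN⟩ := Nat.exists_prime_and_dvd (n := N) (by omega)
  haveI : Fact p.Prime := ⟨hp⟩
  have hpn : p ∣ n := hgood p hp hpN
  have hpphi : (p:ℤ) ∣ (cyclotomic n ℤ).eval (b:ℤ) := natAbs_dvd_int (hNdef ▸ hpN)
  have huniq : ∀ {d : ℕ}, d.Prime → d ∣ N → d = p := by
    intro d hd hdN
    exact unique_common_prime b n d p (by omega) hd hp hn0 (natAbs_dvd_int (hNdef ▸ hdN)) hpphi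
      (hgood d hd hdN) hpn
  have hNpow : N = p ^ N.primeFactorsList.length :=
    Nat.eq_prime_pow_of_unique_prime_dvd (by omega) huniq
  have hnotsq : ¬ p ^ 2 ∣ N := by
    rw [hNdef]
    rcases eq_or_ne p 2 with rfl | hp2
    · exact mult_le_one_two b n hb hn hpn hpphi
    · exact mult_le_one_odd b n p hb hp (hp.odd_of_ne_two hp2) hn0 hpn hpphi
  have hNp : N = p := by
    have hlen : N.primeFactorsList.length ≤ 1 := by
      by_contra h
      push_neg at h
      exact hnotsq (hNpow ▸ pow_dvd_pow p h)
    have hlen0 : N.primeFactorsList.length ≠ 0 := by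
      intro h
      rw [h, pow_zero] at hNpow
      omega
    have h1 : N.primeFactorsList.length = 1 := by omega
    rw [hNpow, h1, pow_one]
  -- now size contradiction
  rcases Nat.lt_or_ge b 3 with hb3 | hb3
  · -- b = 2
    have hb2 : b = 2 := by omega
    subst hb2
    have hNdef2 : N = ((cyclotomic n ℤ).eval (2:ℤ)).natAbs := by rw [hNdef]; norm_num
    -- p is odd
    have hNodd : ¬ 2 ∣ N := by
      intro h2
      have h1 : N ∣ 2 ^ n - 1 := hNdef ▸ phi_dvd 2 n (by omega) hn0
      have h2n : (2:ℕ) ∣ 2 ^ n - 1 := h2.trans h1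
      have : 2 ≤ 2 ^ n := le_trans (by omega) (Nat.le_self_pow hn0.ne' 2)
      have h3 : (2:ℕ) ∣ 2 ^ n := dvd_pow_self 2 hn0.ne'
      omega
    have hp2 : p ≠ 2 := fun h => hNodd (h ▸ hpN)
    have hp3 : 3 ≤ p := by have := hp.two_le; omega
    have hm : ordCompl[p] n ∣ p - 1 := ordCompl_dvd_sub_one 2 n p (by omega) hp hn0 hpphi hpn
    have hk1 : 1 ≤ n.factorization p := Nat.Prime.factorization_pos_of_dvd hp hn0.ne' hpn
    rcases Nat.lt_or_ge 1 (n.factorization p) with hk2 | hk2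
    · -- k ≥ 2 : p ∣ n / p
      have hppn : p * p ∣ n := by
        calc p * p ∣ p ^ n.factorization p := by
              have h4 : p * p = p ^ 2 := by ring
              rw [h4]; exact pow_dvd_pow p hk2
          _ ∣ n := Nat.ordProj_dvd n p
      have hdvd2 : p ∣ n / p := (Nat.dvd_div_iff_mul_dvd hpn).mpr hppn
      have hnp1 : 1 < n / p := by
        have h0 : 0 < n / p := Nat.div_pos (Nat.le_of_dvd hn0 hpn) hp.pos
        have := Nat.le_of_dvd h0 hdvd2
        omega
      have hexp := cyclotomic_expand_eq_cyclotomic hp hdvd2 ℤ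
      have hmul : n / p * p = n := Nat.div_mul_cancel hpn
      have heq : (cyclotomic n ℤ).eval (2:ℤ) = (cyclotomic (n/p) ℤ).eval ((2:ℤ)^p) := by
        conv_lhs => rw [← hmul]
        rw [← hexp, expand_eval]
      have hlow := sub_one_lt_natAbs_cyclotomic_eval (n := n/p) (q := 2^p) hnp1
        (by have := add_two_le_two_pow p hp.two_le; omega)
      have hcast : ((2^p : ℕ) : ℤ) = (2:ℤ)^p := by push_cast; ring
      rw [hcast, ← heq, ← hNdef2] at hlow
      have := add_two_le_two_pow p hp.two_le
      omega
    · -- k = 1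
      have hk : n.factorization p = 1 := by omega
      have hnpm : n = p * ordCompl[p] n := by
        conv_lhs => rw [← Nat.ordProj_mul_ordCompl_eq_self n p]
        rw [hk, pow_one]
      rcases eq_or_ne (ordCompl[p] n) 1 with hm1 | hm1
      · -- n = p
        have hnp : n = p := by rw [hnpm, hm1, mul_one]
        have heval : (cyclotomic n ℤ).eval (2:ℤ) = 2^p - 1 := by
          rw [hnp, cyclotomic_prime, eval_geom_sum]
          have := geom_sum_mul (2:ℤ) p
          simpa using this
        have hNval : N = 2^p - 1 := by
          have h1 : ((2^p - 1 : ℕ) : ℤ) = (2:ℤ)^p - 1 := cast_pow_sub_one 2 p (by omega)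
          rw [hNdef2, heval, ← h1, Int.natAbs_natCast]
        have := add_two_le_two_pow p hp.two_le
        have h2 : 2 ≤ 2^p := le_trans (by omega) (Nat.le_self_pow hp.pos.ne' 2)
        omega
      · -- m ≥ 2
        obtain ⟨m, hmdef⟩ : ∃ m, m = ordCompl[p] n := ⟨_, rfl⟩
        rw [← hmdef] at hm hnpm hm1
        have hm2 : 2 ≤ m := by
          have h0 : 0 < ordCompl[p] n := Nat.ordCompl_pos p hn0.ne'
          omega
        have hp5 : 5 ≤ p := by
          rcases Nat.lt_or_ge p 5 with h | h
          · exfalso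
            have hpval : p = 3 := by
              interval_cases p
              · rfl
              · exact absurd hp (by norm_num)
            rw [hpval] at hm hnpm
            have h2' : m ∣ 2 := hm
            have hm2' : m = 2 := by
              rcases (Nat.dvd_prime Nat.prime_two).mp h2' with h' | h' <;> omega
            exact hexc ⟨by rw [hnpm, hm2'], rfl⟩
          · exact h
        have hpm : ¬ p ∣ m := hmdef ▸ Nat.not_dvd_ordCompl hp hn0.ne'
        have hexp := cyclotomic_expand_eq_cyclotomic_mul hp hpm ℤ
        have heq : (cyclotomic m ℤ).eval ((2:ℤ)^p)
            = (cyclotomic n ℤ).eval (2:ℤ) * (cyclotomic m ℤ).eval (2:ℤ) := by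
          have h5 := congrArg (fun f => Polynomial.eval (2:ℤ) f) hexp
          simp only [expand_eval, eval_mul] at h5
          rw [h5, hnpm, mul_comm p m]
        obtain ⟨C, hCdef⟩ : ∃ C, C = ((cyclotomic m ℤ).eval (2:ℤ)).natAbs := ⟨_, rfl⟩
        obtain ⟨D, hDdef⟩ : ∃ D, D = ((cyclotomic m ℤ).eval ((2:ℤ)^p)).natAbs := ⟨_, rfl⟩
        have hDNC : D = N * C := by
          rw [hDdef, hNdef2, hCdef, heq, Int.natAbs_mul]
        -- lower bound on D
        have hlowD := sub_one_pow_totient_lt_natAbs_cyclotomic_eval (n := m) (q := 2^p)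
          (by omega) (by have := add_two_le_two_pow p hp.two_le; omega)
        have hcast : ((2^p : ℕ) : ℤ) = (2:ℤ)^p := by push_cast; ring
        rw [hcast, ← hDdef] at hlowD
        -- upper bound on C
        have hupC : C ≤ 3 ^ m.totient := by
          have hreal := cyclotomic_eval_le_add_one_pow_totient (q := (2:ℝ)) (by norm_num) m
          have happ : (cyclotomic m ℝ).eval ((2:ℤ):ℝ)
              = (((cyclotomic m ℤ).eval (2:ℤ) : ℤ) : ℝ) := by
            simpa using cyclotomic.eval_apply (2:ℤ) m (algebraMap ℤ ℝ)
          have hpos : (0:ℤ) < (cyclotomic m ℤ).eval 2 := phi_pos 2 m (by omega)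
          have hCeq : (C : ℤ) = (cyclotomic m ℤ).eval 2 := by
            rw [hCdef]; exact Int.natAbs_of_nonneg hpos.le
          have hfin : ((C:ℝ)) ≤ 3 ^ m.totient := by
            have h6 : ((C:ℝ)) = (((C:ℤ)):ℝ) := by push_cast; ring
            rw [h6, hCeq, ← show ((2:ℤ):ℝ) = (2:ℝ) by norm_num] at *
            rw [← happ]
            calc (cyclotomic m ℝ).eval ((2:ℤ):ℝ) ≤ (((2:ℤ):ℝ) + 1) ^ m.totient := hreal
              _ = 3 ^ m.totient := by norm_num
          exact_mod_cast hfin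
        -- combine
        have hφ : 1 ≤ m.totient := Nat.totient_pos.mpr (by omega)
        have h3p : 3 * p ≤ 2^p - 1 := by
          have := three_mul_add_one_le p hp5
          omega
        have hchain : p * 3 ^ m.totient < N * 3 ^ m.totient := by
          calc p * 3 ^ m.totient ≤ p ^ m.totient * 3 ^ m.totient := by
                apply Nat.mul_le_mul_right
                exact Nat.le_self_pow (by omega) p
            _ = (3 * p) ^ m.totient := by rw [mul_pow]; ring
            _ ≤ (2^p - 1) ^ m.totient := Nat.pow_le_pow_left h3p _
            _ < D := hlowD
            _ = N * C := hDNC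
            _ ≤ N * 3 ^ m.totient := Nat.mul_le_mul_left N hupC
        have hlt : p < N := lt_of_mul_lt_mul_right hchain (Nat.zero_le _)
        omega
  · -- b ≥ 3
    have h1 := sub_one_pow_totient_lt_natAbs_cyclotomic_eval hn1 hb1
    rw [← hNdef] at h1
    have h2 : p - 1 ≤ n.totient := by
      have hd : Nat.totient p ∣ Nat.totient n := Nat.totient_dvd_of_dvd hpn
      have h5 : Nat.totient p = p - 1 := Nat.totient_prime hp
      have hpos : 0 < n.totient := Nat.totient_pos.mpr hn0
      have := Nat.le_of_dvd hpos hd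
      omega
    have h3 : p ≤ (b-1) ^ n.totient := by
      calc p ≤ 2 ^ (p-1) := le_two_pow_pred p hp.pos
        _ ≤ 2 ^ n.totient := Nat.pow_le_pow_right (by omega) h2
        _ ≤ (b-1) ^ n.totient := Nat.pow_le_pow_left (by omega) _
    omega

theorem main2 (b : ℕ) (hb : 2 ≤ b) (hpow : ¬ ∃ γ : ℕ, b = 2 ^ γ - 1) :
    ∃ p : ℕ, p.Prime ∧ orderOf ((b:ℕ) : ZMod p) = 2 := by
  -- b+1 has an odd prime factor
  have hb1 : b + 1 ≠ 1 := by omega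
  have hodd : ∃ p : ℕ, p.Prime ∧ p ∣ b + 1 ∧ p ≠ 2 := by
    by_contra h
    push_neg at h
    have huniq : ∀ {d : ℕ}, d.Prime → d ∣ b + 1 → d = 2 := fun hd hdd => h _ hd hdd
    have := Nat.eq_prime_pow_of_unique_prime_dvd (p := 2) (by omega) huniq
    exact hpow ⟨(b+1).primeFactorsList.length, by omega⟩
  obtain ⟨p, hp, hpb, hp2⟩ := hodd
  haveI : Fact p.Prime := ⟨hp⟩
  refine ⟨p, hp, ?_⟩
  have hcast : ((b:ℕ) : ZMod p) = -1 := by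
    have h0 : (((b + 1 : ℕ)) : ZMod p) = 0 := (ZMod.natCast_eq_zero_iff _ _).mpr hpb
    push_cast at h0
    linear_combination h0
  rw [hcast, orderOf_neg_one, if_neg]
  rw [ZMod.ringChar_zmod_n]
  exact hp2

theorem exc2 (b γ p : ℕ) (hb : 2 ≤ b) (hbγ : b = 2 ^ γ - 1) (hp : p.Prime) :
    orderOf ((b:ℕ) : ZMod p) ≠ 2 := by
  haveI : Fact p.Prime := ⟨hp⟩
  intro h
  have hx2 : ((b:ℕ) : ZMod p) ^ 2 = 1 := by rw [← h]; exact pow_orderOf_eq_one _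
  have hxne : ((b:ℕ) : ZMod p) ≠ 1 := by
    intro h1
    rw [h1] at h
    simp at h
  have hxm : ((b:ℕ) : ZMod p) = -1 := by
    have h5 : ((b:ℕ) : ZMod p) * ((b:ℕ) : ZMod p) = 1 := by rw [← pow_two]; exact hx2
    rcases mul_self_eq_one_iff.mp h5 with h1 | h1
    · exact absurd h1 hxne
    · exact h1
  have hpb : p ∣ b + 1 := by
    have h0 : (((b + 1 : ℕ)) : ZMod p) = 0 := by
      push_cast
      rw [hxm]
      ring
    exact (ZMod.natCast_eq_zero_iff _ _).mp h0
  have hγ : b + 1 = 2 ^ γ := by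
    have : 1 ≤ 2 ^ γ := Nat.one_le_two_pow
    omega
  have hp2 : p = 2 := by
    have h2 : p ∣ 2 ^ γ := by rw [← hγ]; exact hpb
    have h3 := hp.dvd_of_dvd_pow h2
    have h4 := Nat.le_of_dvd (by omega) h3
    have := hp.two_le
    omega
  apply hxne
  rw [hxm]
  have h20 : ((2:ℕ) : ZMod p) = 0 :=
    (ZMod.natCast_eq_zero_iff _ _).mpr (by rw [hp2])
  push_cast at h20
  linear_combination -h20

theorem exc6 (p : ℕ) (hp : p.Prime) : orderOf ((2:ℕ) : ZMod p) ≠ 6 := by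
  haveI : Fact p.Prime := ⟨hp⟩
  intro h
  have h63 : p ∣ 63 := by
    have h1 : ((2:ℕ) : ZMod p) ^ 6 = 1 := by rw [← h]; exact pow_orderOf_eq_one _
    have h0 : (((63:ℕ)) : ZMod p) = 0 := by
      have h5 : ((2:ℕ) : ZMod p) ^ 6 - 1 = 0 := by rw [h1]; ring
      push_cast at h5 ⊢
      linear_combination h5
    exact (ZMod.natCast_eq_zero_iff _ _).mp h0
  have hple : p ≤ 63 := Nat.le_of_dvd (by norm_num) h63
  have hp2 : 2 ≤ p := hp.two_le
  have hval : p = 3 ∨ p = 7 := by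
    interval_cases p <;> revert h63 hp <;> decide
  rcases hval with hv | hv
  · have h30 : ((3:ℕ) : ZMod p) = 0 :=
      (ZMod.natCast_eq_zero_iff _ _).mpr (by rw [hv])
    have h2 : ((2:ℕ) : ZMod p) ^ 2 = 1 := by
      push_cast at h30 ⊢
      linear_combination h30
    have := orderOf_dvd_of_pow_eq_one h2
    rw [h] at this
    norm_num at this
  · have h70 : ((7:ℕ) : ZMod p) = 0 :=
      (ZMod.natCast_eq_zero_iff _ _).mpr (by rw [hv])
    have h3 : ((2:ℕ) : ZMod p) ^ 3 = 1 := by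
      push_cast at h70 ⊢
      linear_combination h70
    have := orderOf_dvd_of_pow_eq_one h3
    rw [h] at this
    norm_num at this

theorem stmt13 (b n : ℕ) (hb : 2 ≤ b) (hn : 2 ≤ n) :
    (∃ p : ℕ, p.Prime ∧ ord b p = n) ↔
      ¬ ((n = 2 ∧ ∃ γ : ℕ, b = 2 ^ γ - 1) ∨ (n = 6 ∧ b = 2)) := by
  constructor
  · rintro ⟨p, hp, hord⟩ (⟨hn2, γ, hbγ⟩ | ⟨hn6, hb2⟩)
    · subst hn2
      exact exc2 b γ p hb hbγ hp (by simpa [ord] using hord)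
    · subst hn6; subst hb2
      exact exc6 p hp (by simpa [ord] using hord)
  · intro hnot
    rcases eq_or_ne n 2 with rfl | hn2
    · have hno : ¬ ∃ γ : ℕ, b = 2 ^ γ - 1 := fun ⟨γ, hγ⟩ => hnot (Or.inl ⟨rfl, γ, hγ⟩)
      obtain ⟨p, hp, ho⟩ := main2 b hb hno
      exact ⟨p, hp, by simpa [ord] using ho⟩
    · have hn3 : 3 ≤ n := by omega
      have hne : ¬ (n = 6 ∧ b = 2) := fun ⟨h6, h2⟩ => hnot (Or.inr ⟨h6, h2⟩)
      obtain ⟨p, hp, ho⟩ := main3 b n hb hn3 hne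
      exact ⟨p, hp, by simpa [ord] using ho⟩
end

section
/- Let N and b be coprime integers with |M_b(N)| > 1. Then there exists a positive integer z such that M_b(zN) = {|b|_N} (in particular |b|_{zN} = |b|_N and zN has Midy's property only for d = |b|_N). -/
private lemma pow_one_sub_dvd {b m k : ℕ} (h : m ∣ k) : b ^ m - 1 ∣ b ^ k - 1 := by
  obtain ⟨t, rfl⟩ := h
  simpa [one_pow, pow_mul] using Nat.sub_dvd_pow_sub_pow (b ^ m) 1 t

private lemma pow_eq_one_iff_dvd {b k M : ℕ} (hb : 1 ≤ b) :
    (b : ZMod M) ^ k = 1 ↔ M ∣ b ^ k - 1 := by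
  have h1 : 1 ≤ b ^ k := Nat.one_le_pow _ _ hb
  rw [← ZMod.natCast_eq_zero_iff, Nat.cast_sub h1]
  push_cast
  rw [sub_eq_zero, eq_comm]

private lemma fact_mono {d n : ℕ} (q : ℕ) (hd : d ≠ 0) (hn : n ≠ 0) (h : d ∣ n) :
    d.factorization q ≤ n.factorization q :=
  Finsupp.le_def.mp ((Nat.factorization_le_iff_dvd hd hn).mpr h) q

private lemma geom_mul {b : ℕ} (p : ℕ) (hb : 1 ≤ b) :
    (b - 1) * (∑ i ∈ Finset.range p, b ^ i) = b ^ p - 1 := by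
  have h1 : 1 ≤ b ^ p := Nat.one_le_pow _ _ hb
  zify [hb, h1]
  exact mul_geom_sum _ _

private lemma not_dvd_of_dvd_sub_one {b q : ℕ} (hb : 2 ≤ b) (hq : q.Prime)
    (hqb : q ∣ b - 1) : ¬ q ∣ b := by
  intro hd
  have h1 : q ∣ b - (b - 1) := Nat.dvd_sub hd hqb
  have h2 : b - (b - 1) = 1 := by omega
  rw [h2] at h1
  exact hq.one_lt.ne' (Nat.eq_one_of_dvd_one h1)

private lemma fact_le_fact_sub_one {b e q : ℕ} (hb : 2 ≤ b) (he : e ≠ 0) (hq : q.Prime)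
    (hqb : q ∣ b - 1) : e.factorization q ≤ (b ^ e - 1).factorization q := by
  haveI := Fact.mk hq
  have hb1 : (1 : ℕ) < b := hb
  have hbk : 1 < b ^ e := Nat.one_lt_pow he hb
  have hA0 : b ^ e - 1 ≠ 0 := by omega
  have hqb' : ¬ q ∣ b := not_dvd_of_dvd_sub_one hb hq hqb
  rw [Nat.factorization_def _ hq, Nat.factorization_def _ hq]
  rcases hq.eq_two_or_odd' with rfl | hodd
  · by_cases he2 : Even e
    · have h2 := padicValNat.pow_two_sub_pow (x := b) (y := 1) hb1 (by simpa using hqb)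
        (by simpa using hqb') he he2
      simp only [one_pow] at h2
      have hv1 : 1 ≤ padicValNat 2 (b - 1) := by
        rw [← Nat.factorization_def _ hq]
        exact hq.factorization_pos_of_dvd (by omega) hqb
      omega
    · have : padicValNat 2 e = 0 := by
        rw [← Nat.factorization_def _ hq]
        exact Nat.factorization_eq_zero_of_not_dvd
          (by intro hdvd; exact he2 ((even_iff_two_dvd).mpr hdvd))
      omega
  · have h2 := padicValNat.pow_sub_pow (p := q) hodd (x := b) (y := 1) hb1
      (by simpa using hqb) hqb' he
    simp only [one_pow] at h2
    omega

private lemma one_add_fact_le {q B n : ℕ} (hq : q.Prime) (hodd : Odd q) (hB : 2 ≤ B)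
    (hqB : q ∣ B - 1) (hn : n ≠ 0) :
    n.factorization q + 1 ≤ (B ^ n - 1).factorization q := by
  haveI := Fact.mk hq
  have hB1 : (1 : ℕ) < B := hB
  have hqB' : ¬ q ∣ B := not_dvd_of_dvd_sub_one hB hq hqB
  have h2 := padicValNat.pow_sub_pow (p := q) hodd (x := B) (y := 1) hB1
    (by simpa using hqB) hqB' hn
  simp only [one_pow] at h2
  have hv1 : 1 ≤ padicValNat q (B - 1) := by
    rw [← Nat.factorization_def _ hq]
    exact hq.factorization_pos_of_dvd (by omega) hqB
  rw [Nat.factorization_def _ hq, Nat.factorization_def _ hq]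
  omega

theorem stmt15 (b N : ℕ) (hb : 2 ≤ b) (hN : 0 < N) (h : Nat.Coprime N b)
    (hcard : 1 < (MidySet b N).ncard) :
    ∃ z : ℕ, 0 < z ∧ ord b (z * N) = ord b N ∧ MidySet b (z * N) = {ord b N} := by
  classical
  set e := ord b N with he_def
  have hNe : N ≠ 0 := hN.ne'
  have he_pos : 0 < e := by
    rw [he_def, ord, ← ZMod.coe_unitOfCoprime b h.symm, orderOf_units]
    haveI : NeZero N := ⟨hNe⟩
    exact orderOf_pos _
  obtain ⟨d₀, hd₀⟩ : (MidySet b N).Nonempty := by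
    rcases Set.eq_empty_or_nonempty (MidySet b N) with hemp | hne
    · rw [hemp] at hcard; simp at hcard
    · exact hne
  obtain ⟨hd₀2, hd₀dvd, hd₀cond⟩ := hd₀
  have he2 : 2 ≤ e := le_trans hd₀2 (Nat.le_of_dvd he_pos hd₀dvd)
  have he0 : e ≠ 0 := by omega
  have hd₀0 : d₀ ≠ 0 := by omega
  set A := b ^ e - 1 with hA_def
  have hbe1 : 1 < b ^ e := Nat.one_lt_pow he0 hb
  have hA0 : A ≠ 0 := by rw [hA_def]; omega
  have hNdvdA : N ∣ A := by
    rw [hA_def]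
    exact (pow_eq_one_iff_dvd (by omega)).mp (pow_orderOf_eq_one (b : ZMod N))
  have hstar : ∀ q : ℕ, q.Prime → q ∣ b - 1 →
      N.factorization q ≤ e.factorization q := by
    intro q hq hqb
    by_cases hqN : q ∣ N
    · have hb1dvd : b - 1 ∣ b ^ (e / d₀) - 1 := by
        simpa using pow_one_sub_dvd (b := b) (m := 1) (one_dvd (e / d₀))
      have h1 : q ∣ Nat.gcd (b ^ (e / d₀) - 1) N := Nat.dvd_gcd (hqb.trans hb1dvd) hqN
      exact (hd₀cond q hq h1).trans (fact_mono q hd₀0 he0 hd₀dvd)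
    · simp [Nat.factorization_eq_zero_of_not_dvd hqN]
  -- the modulus M
  set f : ℕ → ℕ := fun q => if q ∣ b - 1 then e.factorization q else A.factorization q
    with hf_def
  set M := ∏ q ∈ A.primeFactors, q ^ f q with hM_def
  have hM0 : M ≠ 0 := by
    rw [hM_def]
    exact Finset.prod_ne_zero_iff.mpr fun q hq =>
      pow_ne_zero _ (Nat.prime_of_mem_primeFactors hq).ne_zero
  have hMfact : ∀ r : ℕ, M.factorization r = if r ∈ A.primeFactors then f r else 0 := by
    intro r
    rw [hM_def, Nat.factorization_prod
      (fun q hq => pow_ne_zero _ (Nat.prime_of_mem_primeFactors hq).ne_zero)]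
    rw [Finset.sum_apply']
    rw [Finset.sum_congr rfl (fun q hq => by
      rw [(Nat.prime_of_mem_primeFactors hq).factorization_pow, Finsupp.single_apply])]
    exact Finset.sum_ite_eq' A.primeFactors r f
  have hMdvdA : M ∣ A := by
    rw [← Nat.factorization_le_iff_dvd hM0 hA0]
    rw [Finsupp.le_def]
    intro r
    rw [hMfact r]
    by_cases hr : r ∈ A.primeFactors
    · rw [if_pos hr, hf_def]
      by_cases hrb : r ∣ b - 1
      · simp only [if_pos hrb]
        rw [hA_def]
        exact fact_le_fact_sub_one hb he0 (Nat.prime_of_mem_primeFactors hr) hrb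
      · simp only [if_neg hrb]; exact le_refl _
    · rw [if_neg hr]; exact Nat.zero_le _
  have hNdvdM : N ∣ M := by
    rw [← Nat.factorization_le_iff_dvd hNe hM0, Finsupp.le_def]
    intro r
    by_cases hrN : N.factorization r = 0
    · simp [hrN]
    · have hrp : r.Prime := by
        by_contra hc; exact hrN (Nat.factorization_eq_zero_of_not_prime _ hc)
      have hrdvdN : r ∣ N := Nat.dvd_of_factorization_pos hrN
      have hrA : r ∈ A.primeFactors := Nat.mem_primeFactors.mpr ⟨hrp, hrdvdN.trans hNdvdA, hA0⟩
      rw [hMfact r, if_pos hrA, hf_def]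
      by_cases hrb : r ∣ b - 1
      · simp only [if_pos hrb]; exact hstar r hrp hrb
      · simp only [if_neg hrb]; exact fact_mono r hNe hA0 hNdvdA
  have hbM : (b : ZMod M) ^ e = 1 := (pow_eq_one_iff_dvd (by omega)).mpr (hA_def ▸ hMdvdA)
  have hordM : ord b M = e := by
    apply Nat.dvd_antisymm (orderOf_dvd_of_pow_eq_one hbM)
    rw [he_def]
    unfold ord
    have hmap : (ZMod.castHom hNdvdM (ZMod N)) ((b : ZMod M)) = (b : ZMod N) := by
      simp [map_natCast]
    rw [← hmap]
    exact orderOf_map_dvd _ _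
  have hzN : M / N * N = M := Nat.div_mul_cancel hNdvdM
  refine ⟨M / N, Nat.div_pos (Nat.le_of_dvd (Nat.pos_of_ne_zero hM0) hNdvdM) hN, ?_, ?_⟩
  · rw [hzN, hordM]
  · rw [hzN]
    ext d
    simp only [MidySet, hordM, Set.mem_setOf_eq, Set.mem_singleton_iff]
    constructor
    · rintro ⟨hd2, hdvd, hcond⟩
      by_contra hne
      have hd0 : d ≠ 0 := by omega
      obtain ⟨c, hc⟩ := hdvd
      have hc0 : c ≠ 0 := by rintro rfl; rw [mul_zero] at hc; exact he0 hc
      have hc1 : c ≠ 1 := by rintro rfl; rw [mul_one] at hc; exact hne hc.symm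
      obtain ⟨p, hp, hpc⟩ := Nat.exists_prime_and_dvd hc1
      have hed : e / d = c := by rw [hc, Nat.mul_div_cancel_left _ (Nat.pos_of_ne_zero hd0)]
      have hpe : p ∣ e := hc ▸ (hpc.mul_left d)
      have hbp1 : 1 < b ^ p := Nat.one_lt_pow hp.ne_zero hb
      by_cases hall : ∀ q : ℕ, q.Prime → q ∣ b ^ p - 1 → q ∣ b - 1
      · -- all prime factors of b^p - 1 divide b - 1 : then p ∣ b - 1
        set S := ∑ i ∈ Finset.range p, b ^ i with hS_def
        have hS2 : 2 ≤ S := by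
          have hsub : ∑ i ∈ Finset.range 2, b ^ i ≤ S := by
            rw [hS_def]
            exact Finset.sum_le_sum_of_subset (Finset.range_subset_range.mpr hp.two_le)
          simp [Finset.sum_range_succ] at hsub
          omega
        obtain ⟨q, hq, hqS⟩ := Nat.exists_prime_and_dvd (by omega : S ≠ 1)
        have hSdvd : S ∣ b ^ p - 1 := ⟨b - 1, by rw [mul_comm]; exact (geom_mul p (by omega)).symm⟩
        have hqb1 : q ∣ b - 1 := hall q hq (hqS.trans hSdvd)
        have hbq : (b : ZMod q) = 1 := by
          have h0 : ((b - 1 : ℕ) : ZMod q) = 0 := (ZMod.natCast_eq_zero_iff _ _).mpr hqb1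
          have hb' : b - 1 + 1 = b := by omega
          calc (b : ZMod q) = ((b - 1 + 1 : ℕ) : ZMod q) := by rw [hb']
            _ = ((b - 1 : ℕ) : ZMod q) + 1 := by push_cast; ring
            _ = 1 := by rw [h0]; ring
        have hq_p : q = p := by
          have hSq : ((S : ℕ) : ZMod q) = 0 := (ZMod.natCast_eq_zero_iff _ _).mpr hqS
          have hSp : ((S : ℕ) : ZMod q) = (p : ZMod q) := by
            rw [hS_def]; push_cast; simp [hbq]
          rw [hSp] at hSq
          exact (Nat.prime_dvd_prime_iff_eq hq hp).mp
            ((ZMod.natCast_eq_zero_iff _ _).mp hSq)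
        subst hq_p
        have hb1A : b - 1 ∣ A := by
          rw [hA_def]; simpa using pow_one_sub_dvd (b := b) (m := 1) (one_dvd e)
        have hpA : q ∈ A.primeFactors := Nat.mem_primeFactors.mpr ⟨hq, hqb1.trans hb1A, hA0⟩
        have hfp : M.factorization q = e.factorization q := by
          rw [hMfact q, if_pos hpA, hf_def]; simp only [if_pos hqb1]
        have hpM : q ∣ M := Nat.dvd_of_factorization_pos (by
          rw [hfp]; exact (hq.factorization_pos_of_dvd he0 hpe).ne')
        have hb1ed : b - 1 ∣ b ^ (e / d) - 1 := by
          simpa using pow_one_sub_dvd (b := b) (m := 1) (one_dvd (e / d))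
        have hle := hcond q hq (Nat.dvd_gcd (hqb1.trans hb1ed) hpM)
        rw [hfp] at hle
        have hsplit : e.factorization q = d.factorization q + c.factorization q := by
          rw [hc, Nat.factorization_mul hd0 hc0]; simp
        have hcp : 0 < c.factorization q := hq.factorization_pos_of_dvd hc0 hpc
        omega
      · push_neg at hall
        obtain ⟨q, hq, hqBp, hqb1⟩ := hall
        have hq2 : q ≠ 2 := by
          rintro rfl
          apply hqb1
          have hb2 : ¬ 2 ∣ b := by
            intro h2b
            have h2p : 2 ∣ b ^ p := dvd_pow h2b hp.ne_zero
            omega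
          omega
        have hodd : Odd q := hq.odd_of_ne_two hq2
        have hqA : q ∣ A := by rw [hA_def]; exact hqBp.trans (pow_one_sub_dvd hpe)
        have hqAf : q ∈ A.primeFactors := Nat.mem_primeFactors.mpr ⟨hq, hqA, hA0⟩
        have hfq : M.factorization q = A.factorization q := by
          rw [hMfact q, if_pos hqAf, hf_def]; simp only [if_neg hqb1]
        have hqM : q ∣ M := Nat.dvd_of_factorization_pos (by
          rw [hfq]; exact (hq.factorization_pos_of_dvd hA0 hqA).ne')
        have hpd : p ∣ e / d := hed ▸ hpc
        have hle := hcond q hq (Nat.dvd_gcd (hqBp.trans (pow_one_sub_dvd hpd)) hqM)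
        rw [hfq] at hle
        have hep0 : e / p ≠ 0 := by
          have := Nat.div_pos (Nat.le_of_dvd (Nat.pos_of_ne_zero he0) hpe) hp.pos
          omega
        have hA_eq : A = (b ^ p) ^ (e / p) - 1 := by
          rw [hA_def, ← pow_mul, Nat.mul_div_cancel' hpe]
        have hineq := one_add_fact_le hq hodd hbp1 hqBp hep0
        rw [← hA_eq] at hineq
        obtain ⟨c', rfl⟩ := hpc
        have hdep : d ∣ e / p := by
          have h1 : e = p * (d * c') := by rw [hc]; ring
          rw [h1, Nat.mul_div_cancel_left _ hp.pos]
          exact Dvd.intro _ rfl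
        have hmono := fact_mono q hd0 hep0 hdep
        omega
    · rintro rfl
      refine ⟨he2, dvd_refl _, ?_⟩
      intro q hq hgcd
      rw [Nat.div_self (Nat.pos_of_ne_zero he0), pow_one] at hgcd
      have hqb : q ∣ b - 1 := hgcd.trans (Nat.gcd_dvd_left _ _)
      rw [hMfact q]
      by_cases hr : q ∈ A.primeFactors
      · rw [if_pos hr, hf_def]; simp only [if_pos hqb]; exact le_refl _
      · rw [if_neg hr]; exact Nat.zero_le _
end
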